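/- arXiv:1406.0696 — 5 statements merged into one kernel-verified Lean document; each statement's English description precedes it below -/
import Mathlib

section
/- The tower number 𝔱 equals the bounding number 𝔟 if and only if there exists an unbounded tower of cardinality 𝔱. -/
def EvLE (f g : ℕ → ℕ) : Prop := ∀ᶠ n in Filter.atTop, f n ≤ g n

/-- A family `S ⊆ ω^ω` is unbounded with respect to eventual domination. -/
def Ubdd (S : Set (ℕ → ℕ)) : Prop := ¬ ∃ g : ℕ → ℕ, ∀ f ∈ S, EvLE f g

/-- The bounding number 𝔟. -/
noncomputable def bNum : Cardinal :=
  sInf {c : Cardinal | ∃ S : Set (ℕ → ℕ), Ubdd S ∧ Cardinal.mk S = c}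

/-- The increasing enumeration of a subset of ℕ. -/
noncomputable def enumOf (A : Set ℕ) : ℕ → ℕ := Nat.nth (· ∈ A)

/-- `A ⊆* B` : inclusion modulo a finite set. -/
def AlmostSubset (A B : Set ℕ) : Prop := (A \ B).Finite

/-- An unbounded tower of cardinality κ, indexed by the ordinals below κ. -/
def IsUnboundedTower (κ : Cardinal) (T : {α : Ordinal // α < κ.ord} → Set ℕ) : Prop :=
  (∀ α, (T α).Infinite) ∧
  (∀ α β, α < β → AlmostSubset (T β) (T α)) ∧
  (∀ α β, α < β → ¬ AlmostSubset (T α) (T β)) ∧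
  Ubdd (Set.range fun α => enumOf (T α))

/-- A ⊆*-decreasing family of infinite sets of length κ with no infinite
pseudo-intersection. -/
def IsMaximalTower (κ : Cardinal) (T : {α : Ordinal // α < κ.ord} → Set ℕ) : Prop :=
  (∀ α, (T α).Infinite) ∧
  (∀ α β, α < β → AlmostSubset (T β) (T α)) ∧
  ¬ ∃ A : Set ℕ, A.Infinite ∧ ∀ α, AlmostSubset A (T α)

/-- The tower number 𝔱. -/
noncomputable def tNum : Cardinal :=
  sInf {κ : Cardinal | ∃ T : {α : Ordinal // α < κ.ord} → Set ℕ, IsMaximalTower κ T}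


/-!
A `⊆*`-decreasing sequence of infinite sets indexed by an ordinal of cardinality below `𝔱` has an
infinite pseudo-intersection: otherwise its restriction to a cofinal subsequence would be a maximal
tower shorter than `𝔱`. Thinning such pseudo-intersections, a transfinite recursion of length
`κ ≤ 𝔱` builds a strictly `⊆*`-decreasing tower whose enumerations dominate `κ` prescribed
functions. With `κ = 𝔟` and an unbounded family this gives `𝔱 ≤ 𝔟`, since otherwise the tower
would have a pseudo-intersection whose enumeration bounds the family. If `𝔱 = 𝔟`, the same tower
of length `𝔱` is unbounded; conversely an unbounded tower of length `𝔱` has at least `𝔟` members.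

`𝔱` is universe-polymorphic while `𝔟 : Cardinal.{0}`; as `Ordinal.lift` identifies the ordinals
below `κ.ord` and below `(Cardinal.lift κ).ord`, the values of `𝔱` in different universes agree
up to `Cardinal.lift` once some maximal tower exists.
-/

universe u v

lemma AlmostSubset.refl (A : Set ℕ) : AlmostSubset A A := by
  simp [AlmostSubset]

lemma AlmostSubset.trans {A B C : Set ℕ} (hAB : AlmostSubset A B) (hBC : AlmostSubset B C) :
    AlmostSubset A C :=
  (hAB.union hBC).subset fun x hx => by by_cases hxB : x ∈ B <;> simp_all

lemma EvLE.trans {f g h : ℕ → ℕ} (hfg : EvLE f g) (hgh : EvLE g h) : EvLE f h :=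
  (hfg.and hgh).mono fun _ hn => hn.1.trans hn.2

lemma Ubdd.mono {S S' : Set (ℕ → ℕ)} (hS : Ubdd S) (hSS' : S ⊆ S') : Ubdd S' :=
  fun ⟨g, hg⟩ => hS ⟨g, fun f hf => hg f (hSS' hf)⟩

lemma Ubdd.mono_evLE {S S' : Set (ℕ → ℕ)} (hS : Ubdd S) (hSS' : ∀ f ∈ S, ∃ f' ∈ S', EvLE f f') :
    Ubdd S' := fun ⟨g, hg⟩ => hS ⟨g, fun f hf =>
  let ⟨_, hf', hff'⟩ := hSS' f hf
  hff'.trans (hg _ hf')⟩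

lemma Ubdd.nonempty {S : Set (ℕ → ℕ)} (hS : Ubdd S) : S.Nonempty := by
  by_contra hempty
  exact hS ⟨0, fun f hf => (hempty ⟨f, hf⟩).elim⟩

lemma ubdd_univ : Ubdd Set.univ := fun ⟨g, hg⟩ =>
  let ⟨_, hn⟩ := (hg (g + 1) (Set.mem_univ _)).exists
  Nat.not_succ_le_self _ hn

open Classical in
lemma count_le_count_add_card {A B : Set ℕ} (hAB : (A \ B).Finite) (m : ℕ) :
    Nat.count (· ∈ A) m ≤ Nat.count (· ∈ B) m + hAB.toFinset.card := by
  simp only [Nat.count_eq_card_filter_range]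
  calc _ ≤ ({x ∈ Finset.range m | x ∈ B} ∪ hAB.toFinset).card :=
        Finset.card_le_card fun x hx => by by_cases hxB : x ∈ B <;> simp_all
    _ ≤ _ := Finset.card_union_le _ _

open Classical in
lemma exists_enumOf_le_enumOf_add {A B : Set ℕ} (hA : A.Infinite) (hAB : AlmostSubset A B) :
    ∃ j, ∀ n, enumOf B n ≤ enumOf A (n + j) := by
  -- Of the first `n + j + 1` elements of `A`, at most `j = #(A \ B)` lie outside `B`.
  refine ⟨hAB.toFinset.card, fun n => Nat.lt_add_one_iff.1 (Nat.nth_lt_of_lt_count ?_)⟩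
  have hcount := Nat.count_nth_succ_of_infinite (p := (· ∈ A)) hA (n + hAB.toFinset.card)
  have := count_le_count_add_card hAB (enumOf A (n + hAB.toFinset.card) + 1)
  unfold enumOf at this ⊢
  omega

/-- The factor `2` absorbs the shift `j` between the enumerations of `B` and of `A ⊆* B`. -/
lemma evLE_enumOf_of_almostSubset {A B : Set ℕ} {f : ℕ → ℕ} (hA : A.Infinite)
    (hAB : AlmostSubset A B) (hf : ∀ n k, k ≤ 2 * n → f k ≤ enumOf B n) : EvLE f (enumOf A) := by
  obtain ⟨j, hj⟩ := exists_enumOf_le_enumOf_add hA hAB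
  refine Filter.eventually_atTop.2 ⟨2 * j, fun m hm => ?_⟩
  calc f m ≤ enumOf B (m - j) := hf _ _ (by omega)
    _ ≤ enumOf A (m - j + j) := hj _
    _ = enumOf A m := by rw [Nat.sub_add_cancel (by omega)]

lemma le_enumOf_range {u : ℕ → ℕ} (hu : StrictMono u) (n : ℕ) : u n ≤ enumOf (Set.range u) n := by
  have hinf : (Set.range u).Infinite := Set.infinite_range_of_injective hu.injective
  refine Nat.le_nth_of_monotoneOn_of_surjOn u ?_ (hu.monotone.monotoneOn _)
    fun hfin => (hinf hfin).elim
  rintro _ ⟨k, rfl⟩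
  exact ⟨k, fun hfin => (hinf hfin).elim, rfl⟩

/-- `X` consists of the elements of `P` at the even positions `2 * z n`, with `z` strictly
increasing and above `h`; the elements at odd positions stay in `P \ X`. -/
lemma exists_subset_le_enumOf (P : Set ℕ) (hP : P.Infinite) (h : ℕ → ℕ) :
    ∃ X ⊆ P, X.Infinite ∧ (P \ X).Infinite ∧ ∀ n, h n ≤ enumOf X n := by
  have hP' : (Set.ofPred (· ∈ P)).Infinite := hP
  set z : ℕ → ℕ := fun n => n + ∑ k ∈ Finset.range (n + 1), h k
  have hz : StrictMono z := strictMono_nat_of_lt_succ fun n => by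
    simp only [z, Finset.sum_range_succ _ (n + 1)]
    omega
  have hhz (n : ℕ) : h n ≤ z n :=
    (Finset.single_le_sum (by simp) (Finset.self_mem_range_succ n)).trans (Nat.le_add_left _ _)
  have hu : StrictMono fun n => enumOf P (2 * z n) :=
    (Nat.nth_strictMono hP').comp fun a b hab => by have := hz hab; omega
  refine ⟨Set.range fun n => enumOf P (2 * z n), ?_, Set.infinite_range_of_injective hu.injective,
    ?_, fun n => ?_⟩
  · rintro _ ⟨n, rfl⟩
    exact Nat.nth_mem_of_infinite hP' _
  · refine Set.infinite_of_injective_forall_mem (f := fun m => enumOf P (2 * m + 1))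
      (fun a b hab => by have := Nat.nth_injective hP' hab; omega) fun m => ⟨?_, ?_⟩
    · exact Nat.nth_mem_of_infinite hP' _
    · rintro ⟨n, hn⟩
      have := Nat.nth_injective hP' hn
      omega
  · calc h n ≤ z n := hhz n
      _ ≤ 2 * z n := by omega
      _ ≤ enumOf P (2 * z n) := Nat.le_nth fun hfin => (hP' hfin).elim
      _ ≤ _ := le_enumOf_range hu n

lemma tNum_le {κ : Cardinal} {T : {α : Ordinal // α < κ.ord} → Set ℕ}
    (hT : IsMaximalTower κ T) : tNum ≤ κ :=
  csInf_le' ⟨T, hT⟩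

lemma exists_isMaximalTower_tNum (h : ∃ κ : Cardinal.{u}, ∃ T, IsMaximalTower κ T) :
    ∃ T, IsMaximalTower tNum.{u} T :=
  let ⟨κ, hκ⟩ := h
  csInf_mem (s := {κ | ∃ T, IsMaximalTower κ T}) ⟨κ, hκ⟩

lemma exists_isMaximalTower_of_tNum_ne_zero (h : tNum.{u} ≠ 0) :
    ∃ κ : Cardinal.{u}, ∃ T, IsMaximalTower κ T := by
  by_contra! hempty
  have hempty' : {κ : Cardinal.{u} | ∃ T, IsMaximalTower κ T} = ∅ :=
    Set.eq_empty_of_forall_notMem fun κ ⟨T, hT⟩ => hempty κ T hT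
  exact h (by rw [tNum, hempty', Cardinal.sInf_empty])

lemma exists_almostSubset_of_card_lt_tNum {o : Ordinal} (ho : o.card < tNum)
    (X : {β : Ordinal // β < o} → Set ℕ) (hinf : ∀ β, (X β).Infinite)
    (hdec : ∀ β γ, β < γ → AlmostSubset (X γ) (X β)) :
    ∃ A : Set ℕ, A.Infinite ∧ ∀ β, AlmostSubset A (X β) := by
  by_contra hA
  obtain ⟨f, hf⟩ := Ordinal.exists_isFundamentalSeq (o := o) rfl
  have hT : IsMaximalTower o.cof fun i => X (f i) := by
    refine ⟨fun i => hinf _, fun i j hij => hdec _ _ (hf.strictMono hij), ?_⟩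
    rintro ⟨A, hAinf, hAT⟩
    refine hA ⟨A, hAinf, fun β => ?_⟩
    obtain ⟨_, ⟨i, rfl⟩, hβi⟩ := hf.isCofinal_range β
    rcases hβi.eq_or_lt with hβi | hβi
    · exact hβi ▸ hAT i
    · exact (hAT i).trans (hdec _ _ hβi)
  exact ho.not_ge ((tNum_le hT).trans (Ordinal.cof_le_card o))

def IsTowerStep (h : ℕ → ℕ) {α : Ordinal} (prev : ∀ β < α, Set ℕ) (X : Set ℕ) : Prop :=
  X.Infinite ∧ (∀ β hβ, AlmostSubset X (prev β hβ) ∧ ¬AlmostSubset (prev β hβ) X) ∧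
    ∀ n, h n ≤ enumOf X n

lemma exists_isTowerStep {α : Ordinal} (hα : α.card < tNum) (h : ℕ → ℕ)
    (prev : ∀ β < α, Set ℕ) (hinf : ∀ β hβ, (prev β hβ).Infinite)
    (hdec : ∀ β γ hβ hγ, β < γ → AlmostSubset (prev γ hγ) (prev β hβ)) :
    ∃ X, IsTowerStep h prev X := by
  obtain ⟨P, hPinf, hP⟩ := exists_almostSubset_of_card_lt_tNum hα (fun β => prev β.1 β.2)
    (fun β => hinf _ _) fun β γ => hdec _ _ _ _
  obtain ⟨X, hXP, hXinf, hPX, hX⟩ := exists_subset_le_enumOf P hPinf h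
  refine ⟨X, hXinf, fun β hβ => ⟨?_, ?_⟩, hX⟩
  · exact (hP ⟨β, hβ⟩).subset (Set.sdiff_subset_sdiff_left hXP)
  · exact fun hfin => hPX ((hP ⟨β, hβ⟩).union hfin |>.subset fun x hx => by
      by_cases hxβ : x ∈ prev β hβ <;> simp_all)

noncomputable def towerRec (h : Ordinal → ℕ → ℕ) : Ordinal → Set ℕ :=
  WellFoundedLT.fix fun α prev => Classical.epsilon (IsTowerStep (h α) prev)

lemma isTowerStep_towerRec (h : Ordinal → ℕ → ℕ) {α : Ordinal} (hα : α.card < tNum) :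
    IsTowerStep (h α) (fun β (_ : β < α) => towerRec h β) (towerRec h α) := by
  induction α using WellFoundedLT.induction with
  | _ α ih =>
    have ih' (β) (hβ : β < α) := ih β hβ ((Ordinal.card_le_card hβ.le).trans_lt hα)
    rw [towerRec, WellFoundedLT.fix_eq]
    exact Classical.epsilon_spec (exists_isTowerStep hα (h α) _ (fun β hβ => (ih' β hβ).1)
      fun β γ _ hγ hβγ => ((ih' γ hγ).2.1 β hβγ).1)

lemma exists_tower_le_enumOf {κ : Cardinal} (hκ : κ ≤ tNum)
    (h : {α : Ordinal // α < κ.ord} → ℕ → ℕ) :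
    ∃ T : {α : Ordinal // α < κ.ord} → Set ℕ,
      (∀ α, (T α).Infinite) ∧ (∀ α β, α < β → AlmostSubset (T β) (T α)) ∧
      (∀ α β, α < β → ¬AlmostSubset (T α) (T β)) ∧ ∀ α n, h α n ≤ enumOf (T α) n := by
  classical
  let h' (α : Ordinal) : ℕ → ℕ := if hα : α < κ.ord then h ⟨α, hα⟩ else 0
  have hstep (α : {α : Ordinal // α < κ.ord}) :=
    isTowerStep_towerRec h' ((Cardinal.lt_ord.1 α.2).trans_le hκ)
  refine ⟨fun α => towerRec h' α, fun α => (hstep α).1, fun α β hαβ => ((hstep β).2.1 α hαβ).1,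
    fun α β hαβ => ((hstep β).2.1 α hαβ).2, fun α n => ?_⟩
  simpa [h', α.2] using (hstep α).2.2 n

lemma exists_tower_dominating {κ : Cardinal} (hκ : κ ≤ tNum)
    (f : {α : Ordinal // α < κ.ord} → ℕ → ℕ) :
    ∃ T : {α : Ordinal // α < κ.ord} → Set ℕ,
      (∀ α, (T α).Infinite) ∧ (∀ α β, α < β → AlmostSubset (T β) (T α)) ∧
      (∀ α β, α < β → ¬AlmostSubset (T α) (T β)) ∧
      ∀ α n k, k ≤ 2 * n → f α k ≤ enumOf (T α) n := by
  obtain ⟨T, hinf, hdec, hstrict, hdom⟩ :=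
    exists_tower_le_enumOf hκ fun α n => (Finset.range (2 * n + 1)).sup (f α)
  exact ⟨T, hinf, hdec, hstrict, fun α n k hk =>
    (Finset.le_sup (Finset.mem_range_succ_iff.2 hk)).trans (hdom α n)⟩

lemma exists_ubdd_mk_eq_bNum : ∃ S : Set (ℕ → ℕ), Ubdd S ∧ Cardinal.mk S = bNum :=
  csInf_mem (s := {c | ∃ S : Set (ℕ → ℕ), Ubdd S ∧ Cardinal.mk S = c}) ⟨_, _, ubdd_univ, rfl⟩

lemma bNum_ne_zero : bNum ≠ 0 := by
  obtain ⟨S, hS, hmk⟩ := exists_ubdd_mk_eq_bNum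
  exact hmk ▸ Cardinal.mk_ne_zero_iff.2 hS.nonempty.to_subtype

lemma mk_subtype_lt_ord (κ : Cardinal.{u}) :
    Cardinal.mk {α : Ordinal.{u} // α < κ.ord} = Cardinal.lift.{u + 1} κ := by
  have := Cardinal.mk_Iio_ordinal κ.ord
  rwa [Cardinal.card_ord] at this

lemma exists_ubdd_range_lift_bNum :
    ∃ f : {α : Ordinal.{u} // α < (Cardinal.lift.{u} bNum).ord} → ℕ → ℕ, Ubdd (Set.range f) := by
  obtain ⟨S, hS, hmk⟩ := exists_ubdd_mk_eq_bNum
  obtain ⟨e⟩ : Nonempty ({α : Ordinal.{u} // α < (Cardinal.lift.{u} bNum).ord} ≃ S) := by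
    rw [← Cardinal.lift_mk_eq', mk_subtype_lt_ord, hmk]
    simp
  exact ⟨fun α => e α, hS.mono fun s hs => ⟨e.symm ⟨s, hs⟩, by simp⟩⟩

lemma lift_bNum_le_of_ubdd_range {κ : Cardinal.{u}} (f : {α : Ordinal.{u} // α < κ.ord} → ℕ → ℕ)
    (hf : Ubdd (Set.range f)) : Cardinal.lift.{u} bNum ≤ κ := by
  have hb : bNum ≤ Cardinal.mk (Set.range f) := csInf_le' ⟨_, hf, rfl⟩
  have hrange := Cardinal.mk_range_le_lift (f := f)
  rw [mk_subtype_lt_ord, Cardinal.lift_id'] at hrange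
  rw [← Cardinal.lift_le.{u + 1}, Cardinal.lift_lift]
  exact (Cardinal.lift_le.2 hb).trans hrange

lemma tNum_le_lift_bNum : tNum.{u} ≤ Cardinal.lift.{u} bNum := by
  by_contra! hlt
  obtain ⟨f, hf⟩ := exists_ubdd_range_lift_bNum.{u}
  obtain ⟨T, hinf, hdec, -, hdom⟩ := exists_tower_dominating hlt.le f
  obtain ⟨A, hA, hAT⟩ := exists_almostSubset_of_card_lt_tNum
    (by rwa [Cardinal.card_ord]) T hinf hdec
  exact hf ⟨enumOf A, by
    rintro _ ⟨α, rfl⟩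
    exact evLE_enumOf_of_almostSubset hA (hAT α) (hdom α)⟩

lemma exists_isUnboundedTower_of_ubdd_range {κ : Cardinal} (hκ : κ ≤ tNum)
    (f : {α : Ordinal // α < κ.ord} → ℕ → ℕ) (hf : Ubdd (Set.range f)) :
    ∃ T, IsUnboundedTower κ T := by
  obtain ⟨T, hinf, hdec, hstrict, hdom⟩ := exists_tower_dominating hκ f
  refine ⟨T, hinf, hdec, hstrict, hf.mono_evLE ?_⟩
  rintro _ ⟨α, rfl⟩
  exact ⟨_, ⟨α, rfl⟩, evLE_enumOf_of_almostSubset (hinf α) (.refl _) (hdom α)⟩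

noncomputable def liftIndexIso (κ : Cardinal.{v}) :
    {α : Ordinal.{v} // α < κ.ord} ≃o {α : Ordinal.{max v u} // α < (Cardinal.lift.{u} κ).ord} :=
  StrictMono.orderIsoOfSurjective
    (fun α => ⟨Ordinal.lift.{u} α.1, by rw [← Cardinal.lift_ord]; exact Ordinal.lift_lt.2 α.2⟩)
    (fun _ _ h => Ordinal.lift_lt.2 h) fun α => by
      have hα : α.1 < Ordinal.lift.{u} κ.ord := by rw [Cardinal.lift_ord]; exact α.2
      obtain ⟨a, ha, hα⟩ := Ordinal.lt_lift_iff.1 hα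
      exact ⟨⟨a, ha⟩, Subtype.ext hα⟩

lemma isMaximalTower_comp_orderIso_iff {κ : Cardinal.{u}} {κ' : Cardinal.{v}}
    (e : {α : Ordinal.{u} // α < κ.ord} ≃o {α : Ordinal.{v} // α < κ'.ord})
    (T : {α : Ordinal.{v} // α < κ'.ord} → Set ℕ) :
    IsMaximalTower κ (T ∘ e) ↔ IsMaximalTower κ' T := by
  simp only [IsMaximalTower, Function.comp_apply, ← e.lt_iff_lt, e.surjective.forall]

lemma exists_isMaximalTower_lift_iff {κ : Cardinal.{v}} :
    (∃ T, IsMaximalTower (Cardinal.lift.{u} κ) T) ↔ ∃ T, IsMaximalTower κ T :=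
  ⟨fun ⟨T, hT⟩ => ⟨T ∘ liftIndexIso κ, (isMaximalTower_comp_orderIso_iff _ T).2 hT⟩,
    fun ⟨T, hT⟩ => ⟨T ∘ (liftIndexIso κ).symm, (isMaximalTower_comp_orderIso_iff _ T).2 hT⟩⟩

lemma lift_tNum (h : ∃ κ : Cardinal.{v}, ∃ T, IsMaximalTower κ T) :
    Cardinal.lift.{u} tNum.{v} = tNum.{max v u} := by
  have hlift : ∃ T, IsMaximalTower (Cardinal.lift.{u} tNum.{v}) T :=
    exists_isMaximalTower_lift_iff.2 (exists_isMaximalTower_tNum h)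
  obtain ⟨T, hT⟩ := hlift
  have hle : tNum.{max v u} ≤ Cardinal.lift.{u} tNum.{v} := tNum_le hT
  obtain ⟨κ, hκ⟩ := Cardinal.mem_range_lift_of_le hle
  have hκT : ∃ T, IsMaximalTower (Cardinal.lift.{u} κ) T := by
    rw [hκ]
    exact exists_isMaximalTower_tNum ⟨_, T, hT⟩
  obtain ⟨T', hT'⟩ := exists_isMaximalTower_lift_iff.1 hκT
  exact le_antisymm (hκ ▸ Cardinal.lift_le.2 (tNum_le hT')) hle

/-- 𝔱 = 𝔟 if and only if there is an unbounded tower of cardinality 𝔱. -/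
theorem tNum_eq_bNum_iff :
    tNum = bNum ↔
      ∃ T : {α : Ordinal // α < tNum.ord} → Set ℕ, IsUnboundedTower tNum T := by
  constructor
  · intro h
    have htb : tNum = Cardinal.lift bNum := by
      rw [← lift_tNum (exists_isMaximalTower_of_tNum_ne_zero (h ▸ bNum_ne_zero)), h]
    obtain ⟨f, hf⟩ := exists_ubdd_range_lift_bNum
    rw [htb]
    exact exists_isUnboundedTower_of_ubdd_range htb.ge f hf
  · rintro ⟨T, hT⟩
    have htb : tNum = Cardinal.lift bNum :=
      le_antisymm tNum_le_lift_bNum (lift_bNum_le_of_ubdd_range _ hT.2.2.2)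
    have hb : ∃ T, IsMaximalTower bNum T := by
      rw [← exists_isMaximalTower_lift_iff, ← htb]
      exact exists_isMaximalTower_tNum (exists_isMaximalTower_of_tNum_ne_zero
        (htb ▸ Cardinal.lift_eq_zero.not.2 bNum_ne_zero))
    exact Cardinal.lift_injective ((lift_tNum ⟨_, hb⟩).trans htb)
end

section
/- (Talagrand) A filter F on ω (extending the Fréchet filter, viewed as a subset of 2^ω) is meager if and only if there exists a strictly increasing sequence (n_k) of natural numbers such that every F ∈ F meets all but finitely many intervals [n_k, n_{k+1}). -/
open Set Filter

/-- Characteristic function, identifying P(ω) with the Cantor space 2^ω. -/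
noncomputable def chiB (A : Set ℕ) : ℕ → Bool := fun n => @decide (n ∈ A) (Classical.dec _)

/-- A (proper) filter on ω containing all cofinite sets. -/
def IsNPFilter (F : Set (Set ℕ)) : Prop :=
  ∅ ∉ F ∧ (∀ A ∈ F, ∀ B : Set ℕ, A ⊆ B → B ∈ F) ∧
  (∀ A ∈ F, ∀ B ∈ F, A ∩ B ∈ F) ∧
  (∀ A : Set ℕ, Aᶜ.Finite → A ∈ F)

/-- In the product space, points of an open set have a cylinder neighborhood. -/
lemma exists_agree_subset {U : Set (ℕ → Bool)} (hU : IsOpen U) {x : ℕ → Bool} (hx : x ∈ U) :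
    ∃ N : ℕ, ∀ y : ℕ → Bool, (∀ i < N, y i = x i) → y ∈ U := by
  obtain ⟨I, u, h1, h2⟩ := isOpen_pi_iff.mp hU x hx
  refine ⟨(I.sup id) + 1, fun y hy => h2 ?_⟩
  intro i hi
  have : y i = x i := hy i (Nat.lt_succ_of_le (Finset.le_sup (f := id) hi))
  rw [this]; exact (h1 i hi).2

/-- Union of two closed sets with empty interior has empty interior. -/
lemma interior_union_empty {A B : Set (ℕ → Bool)} (hA : IsClosed A)
    (hAi : interior A = ∅) (hBi : interior B = ∅) :
    interior (A ∪ B) = ∅ := by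
  have h1 : interior (A ∪ B) \ A ⊆ interior B :=
    interior_maximal (fun x hx => (interior_subset hx.1).resolve_left hx.2)
      (isOpen_interior.sdiff hA)
  rw [hBi, Set.subset_empty_iff, Set.diff_eq_empty] at h1
  have := interior_maximal h1 isOpen_interior
  rw [hAi, Set.subset_empty_iff] at this
  exact this

/-- Key extension lemma: given a closed nowhere dense set `C` and a level `N`,
there is `M > N` such that any condition on `[0,N)` can be extended to a
condition on `[0,M)` whose cylinder avoids `C`. -/
lemma key_lemma (C : Set (ℕ → Bool)) (hC : IsClosed C) (hCi : interior C = ∅) (N : ℕ) :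
    ∃ M : ℕ, N < M ∧ ∀ x : ℕ → Bool, ∃ y : ℕ → Bool,
      (∀ i < N, y i = x i) ∧ ∀ z : ℕ → Bool, (∀ i < M, z i = y i) → z ∉ C := by
  have H : ∀ s : Fin N → Bool, ∃ (y : ℕ → Bool) (m : ℕ),
      (∀ i, ∀ h : i < N, y i = s ⟨i, h⟩) ∧ ∀ z : ℕ → Bool, (∀ i < m, z i = y i) → z ∉ C := by
    intro s
    set xs : ℕ → Bool := fun i => if h : i < N then s ⟨i, h⟩ else false with hxs
    have hcylopen : IsOpen {y : ℕ → Bool | ∀ i < N, y i = xs i} := by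
      have : {y : ℕ → Bool | ∀ i < N, y i = xs i} =
          ⋂ i ∈ Finset.range N, (fun y : ℕ → Bool => y i) ⁻¹' {xs i} := by
        ext y; simp [Finset.mem_range]
      rw [this]
      exact isOpen_biInter_finset fun i _ =>
        (continuous_apply i).isOpen_preimage _ (isOpen_discrete _)
    have hne : ¬ ({y : ℕ → Bool | ∀ i < N, y i = xs i} ⊆ C) := by
      intro hsub
      have h2 : {y : ℕ → Bool | ∀ i < N, y i = xs i} ⊆ interior C :=
        interior_maximal hsub hcylopen
      rw [hCi, Set.subset_empty_iff] at h2
      have : xs ∈ ({y : ℕ → Bool | ∀ i < N, y i = xs i} : Set (ℕ → Bool)) := fun i _ => rfl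
      rw [h2] at this; exact this
    obtain ⟨y, hyC, hyc⟩ : ∃ y, y ∈ {y : ℕ → Bool | ∀ i < N, y i = xs i} ∧ y ∉ C := by
      by_contra h; push_neg at h; exact hne fun y hy => h y hy
    obtain ⟨m, hm⟩ := exists_agree_subset hC.isOpen_compl hyc
    refine ⟨y, m, fun i h => by rw [hyC i h, hxs]; simp [h], fun z hz => hm z hz⟩
  choose Ys Ms h1 h2 using H
  refine ⟨max (N + 1) (Finset.univ.sup Ms), lt_of_lt_of_le (Nat.lt_succ_self N) (le_max_left _ _),
    fun x => ?_⟩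
  refine ⟨Ys (fun i => x i), fun i h => h1 _ i h, fun z hz => h2 _ z fun i hi => hz i ?_⟩
  exact lt_of_lt_of_le hi
    (le_trans (Finset.le_sup (Finset.mem_univ (fun i : Fin N => x i))) (le_max_right _ _))

lemma chiB_eq_true {A : Set ℕ} {m : ℕ} : chiB A m = true ↔ m ∈ A := by
  simp [chiB]

/-- Talagrand's characterization of meager filters: F is meager iff there is a
strictly increasing sequence (n_k) such that every member of F meets all but
finitely many intervals [n_k, n_{k+1}). -/
theorem talagrand_meager_filter (F : Set (Set ℕ)) (hF : IsNPFilter F) :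
    IsMeagre (chiB '' F) ↔
      ∃ n : ℕ → ℕ, StrictMono n ∧
        ∀ A ∈ F, ∀ᶠ k in Filter.atTop, ∃ m ∈ A, n k ≤ m ∧ m < n (k + 1) := by
  classical
  obtain ⟨hF0, hFup, hFint, hFcof⟩ := hF
  constructor
  · -- forward direction
    intro hM
    obtain ⟨S, hSnd, hScnt, hScov⟩ := isMeagre_iff_countable_union_isNowhereDense.mp hM
    -- get an enumeration of closed nowhere dense sets covering chiB '' F
    obtain ⟨e, he⟩ : ∃ e : ℕ → Set (ℕ → Bool), insert ∅ S = Set.range e :=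
      (hScnt.insert ∅).exists_eq_range (Set.insert_nonempty _ _)
    have hend : ∀ j, IsNowhereDense (e j) := by
      intro j
      have : e j ∈ insert ∅ S := he ▸ Set.mem_range_self j
      rcases this with h | h
      · rw [h]; exact isNowhereDense_empty
      · exact hSnd _ h
    have hecov : chiB '' F ⊆ ⋃ j, e j := by
      intro x hx
      obtain ⟨t, ht, hxt⟩ := hScov hx
      have : t ∈ Set.range e := he ▸ Set.mem_insert_of_mem _ ht
      obtain ⟨j, rfl⟩ := this
      exact Set.mem_iUnion.mpr ⟨j, hxt⟩
    -- increasing sequence of closed sets with empty interior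
    set C : ℕ → Set (ℕ → Bool) :=
      fun k => Nat.rec (closure (e 0)) (fun k Ck => Ck ∪ closure (e (k + 1))) k with hCdef
    have hCsucc : ∀ k, C (k + 1) = C k ∪ closure (e (k + 1)) := fun k => rfl
    have hCprop : ∀ k, IsClosed (C k) ∧ interior (C k) = ∅ := by
      intro k
      induction k with
      | zero => exact ⟨isClosed_closure, hend 0⟩
      | succ k ih =>
        rw [hCsucc]
        exact ⟨ih.1.union isClosed_closure, interior_union_empty ih.1 ih.2 (hend (k + 1))⟩
    have hCmono : Monotone C := monotone_nat_of_le_succ fun k => by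
      rw [hCsucc]; exact Set.subset_union_left
    have heC : ∀ j, e j ⊆ C j := by
      intro j
      induction j with
      | zero => exact subset_closure
      | succ j _ => rw [hCsucc]; exact subset_closure.trans Set.subset_union_right
    -- the key extension data
    have key : ∀ k N, ∃ M : ℕ, N < M ∧ ∀ x : ℕ → Bool, ∃ y : ℕ → Bool,
        (∀ i < N, y i = x i) ∧ ∀ z : ℕ → Bool, (∀ i < M, z i = y i) → z ∉ C k :=
      fun k N => key_lemma (C k) (hCprop k).1 (hCprop k).2 N
    choose M hM1 hM2 using key
    -- build the sequence n
    set n : ℕ → ℕ := fun k => Nat.rec 0 (fun k nk => M k nk) k with hndef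
    have hnsucc : ∀ k, n (k + 1) = M k (n k) := fun k => rfl
    have hnlt : ∀ k, n k < n (k + 1) := fun k => by rw [hnsucc]; exact hM1 k (n k)
    have hnsm : StrictMono n := strictMono_nat_of_lt_succ hnlt
    have hspec : ∀ k (x : ℕ → Bool), ∃ y : ℕ → Bool,
        (∀ i < n k, y i = x i) ∧ ∀ z : ℕ → Bool, (∀ i < n (k + 1), z i = y i) → z ∉ C k := by
      intro k x; rw [hnsucc]; exact hM2 k (n k) x
    choose Y hY1 hY2 using hspec
    refine ⟨n, hnsm, fun A hA => ?_⟩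
    by_contra hbad
    rw [Filter.not_eventually] at hbad
    -- the bad-interval predicate
    set bad : ℕ → Prop := fun k => ¬∃ m ∈ A, n k ≤ m ∧ m < n (k + 1) with hbaddef
    -- build the approximations
    set h : ℕ → ℕ → Bool := fun k => Nat.rec (chiB A)
      (fun k hk => if bad k then (fun i => if i < n (k + 1) then Y k hk i else hk i) else hk) k
      with hhdef
    have hh : ∀ k, h (k + 1) =
        if bad k then (fun i => if i < n (k + 1) then Y k (h k) i else h k i) else h k :=
      fun k => rfl
    -- stability
    have hstab : ∀ k j, k ≤ j → ∀ i, i < n k → h j i = h k i := by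
      intro k j hkj
      induction j, hkj using Nat.le_induction with
      | base => intro i _; rfl
      | succ j hkj ih =>
        intro i hi
        have hinj : i < n j := lt_of_lt_of_le hi (hnsm.monotone hkj)
        rw [hh j]
        by_cases hb : bad j
        · rw [if_pos hb]
          simp only [if_pos (lt_trans hinj (hnlt j))]
          rw [hY1 j (h j) i hinj]
          exact ih i hi
        · rw [if_neg hb]; exact ih i hi
    -- preservation of A
    have hpres : ∀ k i, chiB A i = true → h k i = true := by
      intro k
      induction k with
      | zero => intro i hi; exact hi
      | succ k ih =>
        intro i hi
        rw [hh k]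
        by_cases hb : bad k
        · rw [if_pos hb]
          show (if i < n (k + 1) then Y k (h k) i else h k i) = true
          by_cases h1 : i < n (k + 1)
          · rw [if_pos h1]
            by_cases h2 : i < n k
            · rw [hY1 k (h k) i h2]; exact ih i hi
            · exfalso
              exact hb ⟨i, chiB_eq_true.mp hi, le_of_not_gt h2, h1⟩
          · rw [if_neg h1]; exact ih i hi
        · rw [if_neg hb]; exact ih i hi
    -- the diagonal limit
    set f : ℕ → Bool := fun i => h (i + 1) i with hfdef
    have hfstab : ∀ k i, i < n k → f i = h k i := by
      intro k i hi
      have h1 : i < n (i + 1) := lt_of_lt_of_le (Nat.lt_succ_self i) hnsm.le_apply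
      rcases le_total k (i + 1) with hle | hle
      · exact hstab k (i + 1) hle i hi
      · exact (hstab (i + 1) k hle i h1).symm
    -- f avoids C k for every bad k
    have havoid : ∀ k, bad k → f ∉ C k := by
      intro k hb
      refine hY2 k (h k) f fun i hi => ?_
      rw [hfstab (k + 1) i hi, hh k, if_pos hb]
      exact if_pos hi
    -- B := {i | f i = true} is in F
    set B : Set ℕ := {i | f i = true} with hBdef
    have hAB : A ⊆ B := by
      intro i hi
      exact hpres (i + 1) i (chiB_eq_true.mpr hi)
    have hBF : B ∈ F := hFup A hA B hAB
    have hchiBf : chiB B = f := by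
      funext i
      cases hfi : f i
      · simp [chiB, hBdef, hfi]
      · simp [chiB, hBdef, hfi]
    have hfC : ∃ j, f ∈ C j := by
      have : chiB B ∈ ⋃ j, e j := hecov ⟨B, hBF, rfl⟩
      rw [hchiBf] at this
      obtain ⟨j, hj⟩ := Set.mem_iUnion.mp this
      exact ⟨j, heC j hj⟩
    obtain ⟨j, hj⟩ := hfC
    obtain ⟨k, hjk, hk⟩ := Filter.frequently_atTop.mp hbad j
    exact havoid k hk (hCmono hjk hj)
  · -- backward direction
    rintro ⟨n, hnsm, hmeet⟩
    set E : ℕ → Set (ℕ → Bool) :=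
      fun j => {x | ∀ k, j ≤ k → ∃ m, n k ≤ m ∧ m < n (k + 1) ∧ x m = true} with hEdef
    have hEclosed : ∀ j, IsClosed (E j) := by
      intro j
      have : E j = ⋂ k, ⋂ (_ : j ≤ k),
          ⋃ m ∈ Finset.Ico (n k) (n (k + 1)), {x : ℕ → Bool | x m = true} := by
        ext x
        simp only [hEdef, Set.mem_setOf_eq, Set.mem_iInter, Set.mem_iUnion, Finset.mem_Ico,
          exists_prop]
        constructor
        · intro hx k hk
          obtain ⟨m, h1, h2, h3⟩ := hx k hk
          exact ⟨m, ⟨h1, h2⟩, h3⟩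
        · intro hx k hk
          obtain ⟨m, ⟨h1, h2⟩, h3⟩ := hx k hk
          exact ⟨m, h1, h2, h3⟩
      rw [this]
      refine isClosed_iInter fun k => isClosed_iInter fun _ => ?_
      refine Set.Finite.isClosed_biUnion (Finset.Ico (n k) (n (k + 1))).finite_toSet fun m _ => ?_
      have : {x : ℕ → Bool | x m = true} = (fun x : ℕ → Bool => x m) ⁻¹' {true} := rfl
      rw [this]
      exact IsClosed.preimage (continuous_apply m) (isClosed_discrete _)
    have hEnd : ∀ j, IsNowhereDense (E j) := by
      intro j
      rw [(hEclosed j).isNowhereDense_iff]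
      rw [Set.eq_empty_iff_forall_notMem]
      intro x hx
      obtain ⟨N, hN⟩ := exists_agree_subset isOpen_interior hx
      set y : ℕ → Bool := fun i => if i < N then x i else false with hydef
      have hyE : y ∈ E j := interior_subset (hN y fun i hi => by simp [hydef, hi])
      set k := max j N with hkdef
      obtain ⟨m, h1, _, h3⟩ := hyE k (le_max_left _ _)
      have hNm : N ≤ m := le_trans (le_trans (le_max_right j N) hnsm.le_apply) h1
      rw [hydef] at h3
      simp only [Nat.not_lt.mpr hNm, if_false] at h3
      exact Bool.false_ne_true h3
    rw [isMeagre_iff_countable_union_isNowhereDense]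
    refine ⟨Set.range E, ?_, Set.countable_range E, ?_⟩
    · rintro t ⟨j, rfl⟩; exact hEnd j
    · rintro x ⟨A, hA, rfl⟩
      obtain ⟨j, hj⟩ := Filter.eventually_atTop.mp (hmeet A hA)
      refine ⟨E j, Set.mem_range_self j, fun k hk => ?_⟩
      obtain ⟨m, hmA, h1, h2⟩ := hj k hk
      exact ⟨m, h1, h2, chiB_eq_true.mpr hmA⟩
end

section
/- Suppose ⟨U_n : n ∈ ω⟩ is a sequence of open covers of X, U_n = {U^n_k : k ∈ ω} with U^{n+1}_k ⊆ U^n_k ⊆ U^n_{k+1} for all n,k, and V = {U^n_{k_n} : n ∈ ω} is an ω-cover of X. If there is a strictly increasing sequence (m_n) such that for every x ∈ X the set I_V(x) = {m : x ∈ U^m_{k_m}} meets all but finitely many intervals [m_n, m_{n+1}), then the sets W_n = ∪{U^m_{k_m} : m ∈ [m_n, m_{n+1})} form a γ-cover of X, and each W_n is a union of finitely many members of U_n. -/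
/-- From an interval-hitting condition on the index sets I_V(x) one obtains a
γ-cover by U_n-bounded sets. -/
theorem gamma_cover_from_intervals {X : Type*} [TopologicalSpace X]
    (U : ℕ → ℕ → Set X) (hopen : ∀ n k, IsOpen (U n k))
    (hcov : ∀ n, (⋃ k, U n k) = Set.univ)
    (hmono₁ : ∀ n k, U (n + 1) k ⊆ U n k) (hmono₂ : ∀ n k, U n k ⊆ U n (k + 1))
    (k : ℕ → ℕ)
    (hω : ∀ S : Finset X, ∃ m, ∀ x ∈ S, x ∈ U m (k m))
    (hXnot : ∀ m, U m (k m) ≠ Set.univ)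
    (m : ℕ → ℕ) (hm : StrictMono m)
    (hhit : ∀ x : X, ∀ᶠ n in Filter.atTop,
      ∃ j, m n ≤ j ∧ j < m (n + 1) ∧ x ∈ U j (k j)) :
    (∀ x : X, ∀ᶠ n in Filter.atTop,
      x ∈ ⋃ j ∈ Set.Ico (m n) (m (n + 1)), U j (k j)) ∧
    (∀ n, ∃ s : Finset ℕ,
      (⋃ j ∈ Set.Ico (m n) (m (n + 1)), U j (k j)) ⊆ ⋃ i ∈ s, U n i) := by
  constructor
  · intro x
    filter_upwards [hhit x] with n ⟨j, hj1, hj2, hx⟩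
    exact Set.mem_biUnion ⟨hj1, hj2⟩ hx
  · intro n
    refine ⟨(Finset.Ico (m n) (m (n + 1))).image k, ?_⟩
    intro x hx
    simp only [Set.mem_iUnion] at hx ⊢
    obtain ⟨j, ⟨hj1, hj2⟩, hx⟩ := hx
    have hnj : n ≤ j := le_trans (hm.le_apply) hj1
    have hsub : ∀ i, n ≤ i → U i (k j) ⊆ U n (k j) := by
      intro i hi
      induction i with
      | zero => simp_all
      | succ i ih =>
        rcases Nat.lt_or_ge n (i + 1) with h | h
        · exact (hmono₁ i (k j)).trans (ih (Nat.lt_succ_iff.mp h))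
        · have : n = i + 1 := le_antisymm hi h
          subst this; exact le_refl _
    exact ⟨k j, Finset.mem_image_of_mem k (Finset.mem_Ico.mpr ⟨hj1, hj2⟩), hsub j hnj hx⟩
end

section
/- If Φ : X ⇒ Y is a compact-valued upper semicontinuous set-valued map and X has the Menger property, then Φ(X) has the Menger property. -/
/-- The Menger covering property. -/
def Menger (X : Type*) [TopologicalSpace X] : Prop :=
  ∀ U : ℕ → Set (Set X),
    (∀ n, (∀ u ∈ U n, IsOpen u) ∧ ⋃₀ U n = Set.univ) →
    ∃ V : ℕ → Set (Set X), (∀ n, V n ⊆ U n ∧ (V n).Finite) ∧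
      ∀ x : X, ∃ n, x ∈ ⋃₀ V n

/-- Upper semicontinuity of a set-valued map. -/
def UpperSemicontinuousSV {X Y : Type*} [TopologicalSpace X] [TopologicalSpace Y]
    (Φ : X → Set Y) : Prop :=
  ∀ V : Set Y, IsOpen V → IsOpen {x : X | Φ x ⊆ V}

/-- A compact-valued upper semicontinuous image of a Menger space is Menger. -/
theorem usco_image_menger {X Y : Type*} [TopologicalSpace X] [TopologicalSpace Y]
    (Φ : X → Set Y) (hcpt : ∀ x, IsCompact (Φ x)) (husc : UpperSemicontinuousSV Φ)
    (hX : Menger X) :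
    Menger (⋃ x : X, Φ x) := by
  intro U hU
  -- extend each member of U n to an open set of Y
  have hext : ∀ n (u : Set ↥(⋃ x : X, Φ x)), ∃ w : Set Y,
      (u ∈ U n → IsOpen w ∧ Subtype.val ⁻¹' w = u) := by
    intro n u
    by_cases h : u ∈ U n
    · obtain ⟨t, ht, hpre⟩ := isOpen_induced_iff.mp ((hU n).1 u h)
      exact ⟨t, fun _ => ⟨ht, hpre⟩⟩
    · exact ⟨∅, fun h' => absurd h' h⟩
  choose w hw using hext
  -- the derived covers of X
  set W : ℕ → Set (Set X) := fun n =>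
    { O | ∃ F : Set (Set ↥(⋃ x : X, Φ x)), F ⊆ U n ∧ F.Finite ∧
        O = { x | Φ x ⊆ ⋃ u ∈ F, w n u } } with hW
  have hWcov : ∀ n, (∀ O ∈ W n, IsOpen O) ∧ ⋃₀ W n = Set.univ := by
    intro n
    constructor
    · rintro O ⟨F, hFU, -, rfl⟩
      exact husc _ (isOpen_biUnion fun u hu => (hw n u (hFU hu)).1)
    · apply Set.eq_univ_of_forall
      intro x
      -- Φ x is covered by the open sets w n u, u ∈ U n
      have hcover : Φ x ⊆ ⋃ u : U n, w n u := by
        intro z hz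
        have hzZ : z ∈ ⋃ x : X, Φ x := Set.mem_iUnion.mpr ⟨x, hz⟩
        have hz' : (⟨z, hzZ⟩ : ↥(⋃ x : X, Φ x)) ∈ ⋃₀ U n := by
          rw [(hU n).2]; exact Set.mem_univ _
        obtain ⟨u, hu, hzu⟩ := hz'
        refine Set.mem_iUnion.mpr ⟨⟨u, hu⟩, ?_⟩
        have hpre := (hw n u hu).2
        have : (⟨z, hzZ⟩ : ↥(⋃ x : X, Φ x)) ∈ Subtype.val ⁻¹' (w n u) := by
          rw [hpre]; exact hzu
        exact this
      obtain ⟨t, ht⟩ := (hcpt x).elim_finite_subcover (fun u : U n => w n u)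
        (fun u => (hw n u u.2).1) hcover
      refine ⟨{ x' | Φ x' ⊆ ⋃ u ∈ (Subtype.val '' (t : Set (U n))), w n u },
        ⟨Subtype.val '' (t : Set (U n)), ?_, t.finite_toSet.image _, rfl⟩, ?_⟩
      · rintro u ⟨⟨u', hu'⟩, -, rfl⟩; exact hu'
      · intro z hz
        obtain ⟨u, hu, hzu⟩ := Set.mem_iUnion₂.mp (ht hz)
        exact Set.mem_biUnion ⟨u, hu, rfl⟩ hzu
  obtain ⟨V, hV1, hV2⟩ := hX W hWcov
  have hmem : ∀ n (O : Set X), O ∈ V n → ∃ F : Set (Set ↥(⋃ x : X, Φ x)), F ⊆ U n ∧ F.Finite ∧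
      O = { x | Φ x ⊆ ⋃ u ∈ F, w n u } := fun n O h => (hV1 n).1 h
  choose F hFU hFfin hFeq using hmem
  refine ⟨fun n => ⋃ O, ⋃ h : O ∈ V n, F n O h, ?_, ?_⟩
  · intro n
    constructor
    · rintro u hu
      obtain ⟨O, hO, hu⟩ := Set.mem_iUnion₂.mp hu
      exact hFU n O hO hu
    · exact Set.Finite.biUnion' (hV1 n).2 (fun O hO => hFfin n O hO)
  · rintro ⟨z, hzZ⟩
    obtain ⟨x, hzx⟩ := Set.mem_iUnion.mp hzZ
    obtain ⟨n, O, hO, hxO⟩ := hV2 x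
    refine ⟨n, ?_⟩
    have hsub : Φ x ⊆ ⋃ u ∈ F n O hO, w n u := by
      have := hFeq n O hO ▸ hxO; exact this
    obtain ⟨u, hu, hzu⟩ := Set.mem_iUnion₂.mp (hsub hzx)
    have hzu' : (⟨z, hzZ⟩ : ↥(⋃ x : X, Φ x)) ∈ u := by
      have hpre := (hw n u (hFU n O hO hu)).2
      rw [← hpre]; exact hzu
    exact ⟨u, Set.mem_iUnion₂.mpr ⟨O, hO, hu⟩, hzu'⟩
end

section
/- If Φ : X ⇒ Y is a compact-valued upper semicontinuous set-valued map and X has the Hurewicz property, then Φ(X) has the Hurewicz property. -/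
/-- The Hurewicz covering property. -/
def Hurewicz (X : Type*) [TopologicalSpace X] : Prop :=
  ∀ U : ℕ → Set (Set X),
    (∀ n, (∀ u ∈ U n, IsOpen u) ∧ ⋃₀ U n = Set.univ) →
    ∃ V : ℕ → Set (Set X), (∀ n, V n ⊆ U n ∧ (V n).Finite) ∧
      ∀ x : X, ∀ᶠ n in Filter.atTop, x ∈ ⋃₀ V n

/-- A compact-valued upper semicontinuous image of a Hurewicz space is
Hurewicz. -/
theorem usco_image_hurewicz {X Y : Type*} [TopologicalSpace X] [TopologicalSpace Y]
    (Φ : X → Set Y) (hcpt : ∀ x, IsCompact (Φ x)) (husc : UpperSemicontinuousSV Φ)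
    (hX : Hurewicz X) :
    Hurewicz (⋃ x : X, Φ x) := by
  classical
  intro U hU
  -- extend each open set of the subspace to an open set of Y
  have hext : ∀ u : Set ↥(⋃ x : X, Φ x), ∃ t : Set Y,
      IsOpen u → IsOpen t ∧ Subtype.val ⁻¹' t = u := by
    intro u
    by_cases h : IsOpen u
    · obtain ⟨t, ht, htu⟩ := isOpen_induced_iff.mp h
      exact ⟨t, fun _ => ⟨ht, htu⟩⟩
    · exact ⟨∅, fun h' => absurd h' h⟩
  choose e he using hext
  -- auxiliary covers of X
  set C : ℕ → Set (Set X) := fun n =>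
    (fun F : Set (Set ↥(⋃ x : X, Φ x)) => {x | Φ x ⊆ ⋃₀ (e '' F)}) '' {F | F ⊆ U n ∧ F.Finite}
    with hCdef
  have hC : ∀ n, (∀ w ∈ C n, IsOpen w) ∧ ⋃₀ C n = Set.univ := by
    intro n
    constructor
    · rintro w ⟨F, ⟨hFsub, hFfin⟩, rfl⟩
      refine husc _ (isOpen_sUnion ?_)
      rintro t ⟨u, hu, rfl⟩
      exact (he u ((hU n).1 u (hFsub hu))).1
    · apply Set.eq_univ_of_forall
      intro x
      -- Φ x is covered by the extensions of members of U n
      have hcover : Φ x ⊆ ⋃ u : ↥(U n), e ↑u := by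
        intro y hy
        have hyZ : y ∈ ⋃ x : X, Φ x := Set.mem_iUnion.mpr ⟨x, hy⟩
        have : (⟨y, hyZ⟩ : ↥(⋃ x : X, Φ x)) ∈ ⋃₀ U n := by
          rw [(hU n).2]; trivial
        obtain ⟨u, hu, hzu⟩ := this
        refine Set.mem_iUnion.mpr ⟨⟨u, hu⟩, ?_⟩
        have := (he u ((hU n).1 u hu)).2
        rw [← this] at hzu
        exact hzu
      obtain ⟨t, ht⟩ := (hcpt x).elim_finite_subcover (fun u : ↥(U n) => e ↑u)
        (fun u => (he ↑u ((hU n).1 ↑u u.2)).1) hcover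
      refine ⟨{x' | Φ x' ⊆ ⋃₀ (e '' (Subtype.val '' (↑t : Set ↥(U n))))},
        ⟨Subtype.val '' (↑t : Set ↥(U n)),
          ⟨fun u ⟨v, _, hv⟩ => hv ▸ v.2, (t.finite_toSet.image _)⟩, rfl⟩, ?_⟩
      intro y hy
      obtain ⟨u, hu, hyu⟩ := Set.mem_iUnion₂.mp (ht hy)
      exact ⟨e ↑u, ⟨↑u, ⟨u, hu, rfl⟩, rfl⟩, hyu⟩
  obtain ⟨V', hV'sub, hV'γ⟩ := hX C hC
  -- select the finite families
  have hsel : ∀ n w, ∃ F : Set (Set ↥(⋃ x : X, Φ x)), w ∈ V' n →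
      (F ⊆ U n ∧ F.Finite) ∧ {x | Φ x ⊆ ⋃₀ (e '' F)} = w := by
    intro n w
    by_cases hw : w ∈ V' n
    · obtain ⟨F, hF, hFw⟩ := (hV'sub n).1 hw
      exact ⟨F, fun _ => ⟨hF, hFw⟩⟩
    · exact ⟨∅, fun h => absurd h hw⟩
  choose Fsel hFsel using hsel
  refine ⟨fun n => ⋃ w ∈ V' n, Fsel n w, ?_, ?_⟩
  · intro n
    constructor
    · rintro u hu
      obtain ⟨w, hw, hu⟩ := Set.mem_iUnion₂.mp hu
      exact (hFsel n w hw).1.1 hu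
    · exact (hV'sub n).2.biUnion fun w hw => (hFsel n w hw).1.2
  · rintro ⟨y, hyZ⟩
    obtain ⟨x₀, hx₀⟩ := Set.mem_iUnion.mp hyZ
    filter_upwards [hV'γ x₀] with n hn
    obtain ⟨w, hw, hxw⟩ := hn
    obtain ⟨⟨hFsub, _⟩, hFeq⟩ := hFsel n w hw
    rw [← hFeq] at hxw
    obtain ⟨_, ⟨u, hu, rfl⟩, hyu⟩ := hxw hx₀
    refine ⟨u, Set.mem_iUnion₂.mpr ⟨w, hw, hu⟩, ?_⟩
    have := (he u ((hU n).1 u (hFsub hu))).2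
    rw [← this]
    exact hyu
end
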